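/- Let f : X → ℝⁿ be simplexwise α-Lipschitz with respect to the ℓ_p norm, p ∈ [1,∞], and let A_r be the subcomplex spanned by vertices with |f(v)|_p ≥ r. If r > α n^{1/p}/2, then the vertex approximation f', which sends each vertex v of A_r to s_j e_j where j is an index of the largest-absolute-value component of f(v) and s_j its sign, is a simplicial map from A_r to the boundary complex Σ^{n−1} of the n-dimensional cross-polytope. -/

import Mathlib

/-!
If two vertices `u`, `w` of a simplex of `A_r` were sent to `e_j` and `-e_j`, their `j`-th
coordinates `a`, `b` would have opposite signs, so `|a| + |b| = |a - b| ≤ ‖f u - f w‖ ≤ α`.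
On the other hand `j` is a largest coordinate of both points, so comparing the ℓ_p norm with the
sup norm gives `r ≤ ‖f v‖ ≤ n^{1/p} |f(v)_j|` for each of them, hence `2r ≤ n^{1/p} α`.
-/

open scoped ENNReal NNReal

namespace PiLp

variable {ι : Type*} [Fintype ι] {p : ℝ≥0∞} [Fact (1 ≤ p)] {β : ι → Type*}
  [∀ i, SeminormedAddCommGroup (β i)]

theorem norm_le_card_rpow_mul_norm_apply_of_forall_le (x : PiLp p β) {k : ι}
    (hk : ∀ i, ‖x i‖ ≤ ‖x k‖) :
    ‖x‖ ≤ (Fintype.card ι : ℝ) ^ (1 / p).toReal * ‖x k‖ := by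
  have hsup : ‖WithLp.ofLp x‖ ≤ ‖x k‖ := (pi_norm_le_iff_of_nonneg (norm_nonneg _)).mpr hk
  calc ‖x‖ ≤ ((Fintype.card ι : ℝ≥0) ^ (1 / p).toReal : ℝ≥0) * ‖WithLp.ofLp x‖ := by
        simpa using (antilipschitzWith_ofLp p β).le_mul_dist x 0
    _ ≤ (Fintype.card ι : ℝ) ^ (1 / p).toReal * ‖x k‖ := by
        push_cast
        gcongr

end PiLp

theorem abs_sub_eq_abs_add_abs_of_nonneg_iff_neg {G : Type*} [AddCommGroup G] [LinearOrder G]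
    [IsOrderedAddMonoid G] {a b : G} (h : 0 ≤ a ↔ b < 0) : |a - b| = |a| + |b| := by
  rw [sub_eq_add_neg, ← abs_neg b, abs_add_eq_add_abs_iff, neg_nonneg, neg_nonpos]
  by_cases ha : 0 ≤ a
  · exact .inl ⟨ha, (h.mp ha).le⟩
  · exact .inr ⟨le_of_not_ge ha, not_lt.mp (mt h.mpr ha)⟩

theorem nonneg_iff_neg_of_ne {R : Type*} [Zero R] [LinearOrder R] {s t : Bool} {a b : R}
    (hs : s = true ↔ 0 ≤ a) (ht : t = true ↔ 0 ≤ b) (hst : s ≠ t) : 0 ≤ a ↔ b < 0 := by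
  rw [← hs, ← not_le, ← ht]
  cases s <;> cases t <;> simp_all

/-- For a simplexwise `α`-Lipschitz map `f : X → ℝⁿ` (ℓ_p norm, modelled by
`PiLp p`), if `r > α n^{1/p} / 2` then the vertex approximation — sending a vertex `v` to the
signed unit vector `s v • e_{j v}` where `j v` is an index of a largest-absolute-value component
of `f v` and `s v` its sign — is a simplicial map from `A_r` to the boundary `Σ^{n-1}` of the
cross-polytope: no simplex of `A_r` (a simplex all of whose vertices have `‖f v‖ ≥ r`) has two
vertices mapped to an antipodal pair `±e_j`. -/
theorem stmt1 {X : Type*} (n : ℕ) (p : ℝ≥0∞) [Fact (1 ≤ p)]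
    (S : Set (Set X)) (V : Set X)
    (f : X → PiLp p (fun _ : Fin n => ℝ))
    (α : ℝ)
    (hLip : ∀ σ ∈ S, ∀ x ∈ σ, ∀ y ∈ σ, ‖f x - f y‖ ≤ α)
    (j : X → Fin n) (s : X → Bool)
    (hj : ∀ v ∈ V, ∀ i : Fin n,
      |WithLp.equiv p (Fin n → ℝ) (f v) i| ≤ |WithLp.equiv p (Fin n → ℝ) (f v) (j v)|)
    (hs : ∀ v ∈ V, (s v = true ↔ 0 ≤ WithLp.equiv p (Fin n → ℝ) (f v) (j v)))
    (r : ℝ) (hr : α * (n : ℝ) ^ ((1 / p).toReal) / 2 < r) :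
    ∀ σ ∈ S, (∀ v ∈ σ ∩ V, r ≤ ‖f v‖) →
      ∀ u ∈ σ ∩ V, ∀ w ∈ σ ∩ V, ¬(j u = j w ∧ s u ≠ s w) := by
  rintro σ hσ hA u hu w hw ⟨hjuw, hsuw⟩
  set c : ℝ := (n : ℝ) ^ ((1 / p).toReal)
  have hmax (v) (hv : v ∈ σ ∩ V) : r ≤ c * |f v (j v)| := by
    simpa only [Fintype.card_fin, Real.norm_eq_abs] using (hA v hv).trans
      ((f v).norm_le_card_rpow_mul_norm_apply_of_forall_le (k := j v) (hj v hv.2))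
  have hu_max : r ≤ c * |f u (j u)| := hmax u hu
  have hw_max : r ≤ c * |f w (j u)| := hjuw ▸ hmax w hw
  have hdiff : |f u (j u) - f w (j u)| ≤ α :=
    (PiLp.norm_apply_le (f u - f w) (j u)).trans (hLip σ hσ u hu.1 w hw.1)
  have hopp : |f u (j u) - f w (j u)| = |f u (j u)| + |f w (j u)| :=
    abs_sub_eq_abs_add_abs_of_nonneg_iff_neg
      (nonneg_iff_neg_of_ne (hs u hu.2) (hjuw ▸ hs w hw.2) hsuw)
  have hc : 0 ≤ c := by positivity
  have h2r : 2 * r ≤ c * α :=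
    calc 2 * r ≤ c * (|f u (j u)| + |f w (j u)|) := by linarith
      _ = c * |f u (j u) - f w (j u)| := by rw [hopp]
      _ ≤ c * α := by gcongr
  linarith
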